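/- Let K be a compact Hausdorff space of weight κ such that hL(K)⁺ < κ. Then there exist sequences (F_γ)_{γ<κ} of subsets of C(K), (f_γ)_{γ<κ} of elements of C(K), and (x_γ, y_γ)_{γ<κ} of pairs of points of K such that: (a) |F_γ| < κ and F_γ ⊆ F_{γ'} for all γ ≤ γ' < κ; (b) F_λ = ⋃_{γ<λ} F_γ for every limit ordinal λ < κ; (c) f_γ ∈ F_{γ+1}, f_γ(x_γ) = 0 and f_γ(y_γ) = 1 for every γ < κ; (d) f(x_γ) = f(y_γ) for every f ∈ F_γ; (e) whenever f, g ∈ F_γ and p, q ∈ ℚ satisfy {x : f(x) ≤ p} ∩ {x : g(x) ≥ q} = ∅, there is h₁ ∈ F_γ with h₁ ≡ 0 on {x : f(x) ≤ p} and h₁ ≡ 1 on {x : g(x) ≥ q}; and for every neighborhood V of x_γ and every neighborhood W of y_γ there are h₂, h₃ ∈ F_{γ+1} with x_γ ∈ {x : h₂(x) < 1} ⊆ V and y_γ ∈ {x : h₃(x) > 0} ⊆ W. -/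

import Mathlib

open Cardinal

/-- The weight of a topological space: the least cardinality of a base for the topology. -/
noncomputable def weight (K : Type) [TopologicalSpace K] : Cardinal :=
  sInf {c : Cardinal | ∃ B : Set (Set K), TopologicalSpace.IsTopologicalBasis B ∧ c = #B}

/-- The Lindelöf degree of a topological space: the least infinite cardinal `θ` such that
every open cover has a subcover of cardinality at most `θ`. -/
noncomputable def lindelofDeg (X : Type) [TopologicalSpace X] : Cardinal :=
  sInf {θ : Cardinal | Cardinal.aleph0 ≤ θ ∧
    ∀ U : Set (Set X), (∀ u ∈ U, IsOpen u) → ⋃₀ U = Set.univ →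
      ∃ V ⊆ U, ⋃₀ V = Set.univ ∧ #V ≤ θ}

/-- The hereditary Lindelöf degree: the supremum of the Lindelöf degrees of all subspaces. -/
noncomputable def hL (K : Type) [TopologicalSpace K] : Cardinal :=
  ⨆ Y : Set K, lindelofDeg Y

/-!
The sets `F γ` are built by transfinite recursion, with `#(F γ) ≤ hL K + #γ < w(K)`. Fewer than
`w(K)` functions cannot separate the points of `K`: otherwise the preimages of rational
intervals under them would generate the compact Hausdorff topology and give a base that is too
small. This provides points `x γ ≠ y γ` on which all of `F γ` agrees. Since `K \ {x}` is covered by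
at most `hL K` open sets whose closures miss `x`, and `K` is compact, each point `x` has a family of
at most `hL K` Urysohn functions `h` with `h x = 0` whose sets `{h < 1}` form a neighbourhood base
at `x`. `F (γ + 1)` adds these families at `x γ` and at `y γ` (the latter as `1 - h`) and a function
separating `x γ` from `y γ`, and then closes up under a fixed choice of Urysohn functions for the
level-set pairs of (e)(i); countably many rounds suffice, so cardinalities do not grow.
-/

open Set Topology TopologicalSpace

theorem mk_finset_le_max (α : Type*) : #(Finset α) ≤ max ℵ₀ #α := by
  classical exact (mk_le_of_surjective List.toFinset_surjective).trans (mk_list_le_max α)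

theorem mk_setOf_finite_subset_le {α : Type*} (s : Set α) :
    #{f : Set α | f.Finite ∧ f ⊆ s} ≤ max ℵ₀ #s := by
  refine (mk_le_mk_of_subset (t := range fun A : Finset s => ((↑) '' (A : Set s) : Set α)) ?_).trans
    (mk_range_le.trans (mk_finset_le_max s))
  rintro f ⟨hf, hfs⟩
  refine ⟨(hf.preimage Subtype.val_injective.injOn).toFinset, ?_⟩
  simp [Subtype.image_preimage_coe, inter_eq_right.2 hfs]

section LindelofDegree

theorem aleph0_le_lindelofDeg_and_exists_subcover (X : Type) [TopologicalSpace X] :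
    ℵ₀ ≤ lindelofDeg X ∧ ∀ U : Set (Set X), (∀ u ∈ U, IsOpen u) → ⋃₀ U = Set.univ →
      ∃ V ⊆ U, ⋃₀ V = Set.univ ∧ #V ≤ lindelofDeg X := by
  unfold lindelofDeg
  exact csInf_mem (s := {θ | ℵ₀ ≤ θ ∧ ∀ U : Set (Set X), (∀ u ∈ U, IsOpen u) → ⋃₀ U = Set.univ →
      ∃ V ⊆ U, ⋃₀ V = Set.univ ∧ #V ≤ θ}) ⟨ℵ₀ + #(Set X), le_self_add, fun U _ hU =>
    ⟨U, Subset.rfl, hU, (mk_set_le U).trans le_add_self⟩⟩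

variable {K : Type} [TopologicalSpace K]

theorem lindelofDeg_le_hL (Y : Set K) : lindelofDeg Y ≤ hL K :=
  le_ciSup bddAbove_of_small Y

theorem aleph0_le_hL : ℵ₀ ≤ hL K :=
  (aleph0_le_lindelofDeg_and_exists_subcover _).1.trans (lindelofDeg_le_hL (Set.univ : Set K))

theorem exists_subcover_mk_le_hL {ι : Type} (Y : Set K) (U : ι → Set K)
    (hU : ∀ i, IsOpen (U i)) (hYU : Y ⊆ ⋃ i, U i) :
    ∃ J : Set ι, #J ≤ hL K ∧ Y ⊆ ⋃ i ∈ J, U i := by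
  obtain ⟨𝒱, h𝒱, h𝒱Y, h𝒱card⟩ :=
    (aleph0_le_lindelofDeg_and_exists_subcover Y).2 (range fun i => (↑) ⁻¹' U i)
      (forall_mem_range.2 fun i => (hU i).preimage continuous_subtype_val)
      (eq_univ_of_forall fun y => by simpa using hYU (Subtype.property y))
  choose index hindex using fun v : 𝒱 => h𝒱 v.2
  refine ⟨range index, mk_range_le.trans (h𝒱card.trans (lindelofDeg_le_hL Y)), fun y hy => ?_⟩
  obtain ⟨v, hv, hyv⟩ := h𝒱Y.symm ▸ mem_univ (⟨y, hy⟩ : Y)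
  exact mem_biUnion (mem_range_self _) ((hindex ⟨v, hv⟩).ge hyv)

end LindelofDegree

theorem exists_family_mk_le_hL_eqOn_one_compl_nhds {K : Type} [TopologicalSpace K]
    [CompactSpace K] [T2Space K] (x : K) :
    ∃ H : Set C(K, ℝ), #H ≤ hL K ∧ ∀ V ∈ 𝓝 x, ∃ h ∈ H, h x = 0 ∧ EqOn h 1 Vᶜ := by
  choose U W hU hW hyU hxW hUW using fun y : ({x}ᶜ : Set K) => t2_separation y.2
  obtain ⟨J, hJ, hJcover⟩ := exists_subcover_mk_le_hL {x}ᶜ U hU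
    fun y hy => mem_iUnion.2 ⟨⟨y, hy⟩, hyU _⟩
  have hurysohn : ∀ A : Finset J, ∃ h : C(K, ℝ), h x = 0 ∧ EqOn h 1 (⋂ j ∈ A, W j)ᶜ := by
    intro A
    obtain ⟨h, h0, h1, -⟩ := exists_continuous_zero_one_of_isClosed isClosed_singleton
      (isOpen_biInter_finset fun (j : J) _ => hW j).isClosed_compl
      (disjoint_singleton_left.2 (not_not.2 (mem_iInter₂.2 fun (j : J) _ => hxW j)))
    exact ⟨h, h0 rfl, h1⟩
  choose h hx h1 using hurysohn
  refine ⟨range h, mk_range_le.trans ((mk_finset_le_max J).trans (max_le aleph0_le_hL hJ)),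
    fun V hV => ?_⟩
  have hcover : (interior V)ᶜ ⊆ ⋃ j : J, U j := fun z hz =>
    have hzx : z ≠ x := fun hzx => hz (hzx ▸ mem_interior_iff_mem_nhds.2 hV)
    have ⟨j, hj, hzj⟩ := mem_iUnion₂.1 (hJcover hzx)
    mem_iUnion.2 ⟨⟨j, hj⟩, hzj⟩
  obtain ⟨A, hA⟩ := isOpen_interior.isClosed_compl.isCompact.elim_finite_subcover (fun j : J => U j)
    (fun j => hU j) hcover
  refine ⟨h A, mem_range_self A, hx A, (h1 A).mono fun z hzV => ?_⟩
  intro hzW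
  obtain ⟨j, hj, hzU⟩ := mem_iUnion₂.1 (hA fun hz => hzV (interior_subset hz))
  exact disjoint_left.1 (hUW j) hzU (mem_iInter₂.1 hzW j hj)

section Weight

variable {K : Type} [TopologicalSpace K]

theorem weight_le_mk_of_isTopologicalBasis {B : Set (Set K)} (hB : IsTopologicalBasis B) :
    weight K ≤ #B :=
  csInf_le' ⟨B, hB, rfl⟩

theorem weight_le_of_eq_generateFrom {s : Set (Set K)} (hs : ‹TopologicalSpace K› = generateFrom s)
    {c : Cardinal} (hc : ℵ₀ ≤ c) (hsc : #s ≤ c) : weight K ≤ c :=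
  (weight_le_mk_of_isTopologicalBasis (isTopologicalBasis_of_subbasis hs)).trans <|
    mk_image_le.trans <| (mk_setOf_finite_subset_le s).trans (max_le hc hsc)

theorem TopologicalSpace.eq_of_le_of_compactSpace_of_t2Space {X : Type*}
    {t t' : TopologicalSpace X} (hc : @CompactSpace X t) (h2 : @T2Space X t') (h : t ≤ t') :
    t = t' :=
  le_antisymm h <| continuous_id_iff_le.1 <|
    @Continuous.continuous_symm_of_equiv_compact_to_t2 X X t t' hc h2 (Equiv.refl X)
      (continuous_id_iff_le.2 h)

def ratIooPreimages (F : Set C(K, ℝ)) : Set (Set K) :=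
  range fun t : F × ℚ × ℚ => (t.1 : K → ℝ) ⁻¹' Ioo (t.2.1 : ℝ) t.2.2

theorem eq_generateFrom_ratIooPreimages [CompactSpace K] [T2Space K] {F : Set C(K, ℝ)}
    (hF : ∀ x y, x ≠ y → ∃ g ∈ F, g x ≠ g y) :
    ‹TopologicalSpace K› = generateFrom (ratIooPreimages F) := by
  refine eq_of_le_of_compactSpace_of_t2Space ‹_› ?_ <| le_generateFrom <| forall_mem_range.2
    fun t => isOpen_Ioo.preimage t.1.1.continuous
  let := generateFrom (ratIooPreimages F)
  have hcont : ∀ g ∈ F, Continuous (g : K → ℝ) := fun g hg =>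
    Real.isTopologicalBasis_Ioo_rat.continuous_iff.2 fun s hs => by
      obtain ⟨p, q, -, rfl⟩ : ∃ p q : ℚ, p < q ∧ s = Ioo (p : ℝ) q := by simpa using hs
      exact GenerateOpen.basic _ ⟨(⟨g, hg⟩, p, q), rfl⟩
  refine T2Space.of_injective_continuous (f := fun x (g : F) => g.1 x) (fun x y hxy => ?_)
    (continuous_pi fun g => hcont g g.2)
  by_contra hne
  obtain ⟨g, hg, hgxy⟩ := hF x y hne
  exact hgxy (congrFun hxy ⟨g, hg⟩)

theorem weight_le_of_separatesPoints [CompactSpace K] [T2Space K] {F : Set C(K, ℝ)}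
    (hF : ∀ x y, x ≠ y → ∃ g ∈ F, g x ≠ g y) {c : Cardinal} (hc : ℵ₀ ≤ c) (hFc : #F ≤ c) :
    weight K ≤ c := by
  refine weight_le_of_eq_generateFrom (eq_generateFrom_ratIooPreimages hF) hc <|
    mk_range_le.trans ?_
  simp only [mk_prod, lift_id, Cardinal.mkRat]
  calc #F * (ℵ₀ * ℵ₀) ≤ c * (c * c) := by gcongr
    _ = c := by rw [mul_eq_self hc, mul_eq_self hc]

theorem exists_ne_forall_eq_of_mk_lt_weight [CompactSpace K] [T2Space K] {F : Set C(K, ℝ)}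
    (hF : #F < weight K) (hK : ℵ₀ < weight K) : ∃ x y, x ≠ y ∧ ∀ g ∈ F, g x = g y := by
  by_contra! hsep
  exact (weight_le_of_separatesPoints hsep (le_max_left ℵ₀ #F) (le_max_right ℵ₀ #F)).not_gt
    (max_lt hK hF)

theorem exists_pair_ne_forall_eq_of_mk_lt_weight [CompactSpace K] [T2Space K]
    (hK : ℵ₀ < weight K) : ∃ pair : Set C(K, ℝ) → K × K, ∀ S : Set C(K, ℝ), #S < weight K →
      (pair S).1 ≠ (pair S).2 ∧ ∀ g ∈ S, g (pair S).1 = g (pair S).2 := by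
  obtain ⟨x₀, -⟩ := exists_ne_forall_eq_of_mk_lt_weight (F := ∅) (by simpa using hK.pos) hK
  have hpair (S : Set C(K, ℝ)) :
      ∃ p : K × K, #S < weight K → p.1 ≠ p.2 ∧ ∀ g ∈ S, g p.1 = g p.2 := by
    by_cases hS : #S < weight K
    · obtain ⟨x, y, hxy, hSxy⟩ := exists_ne_forall_eq_of_mk_lt_weight hS hK
      exact ⟨(x, y), fun _ => ⟨hxy, hSxy⟩⟩
    · exact ⟨(x₀, x₀), fun h => absurd h hS⟩
  choose pair hpair using hpair
  exact ⟨pair, hpair⟩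

end Weight

section OpClosure

variable {α β : Type} (op : α → α → β → α)

def IsClosedUnder (S : Set α) : Prop :=
  ∀ a ∈ S, ∀ b ∈ S, ∀ i, op a b i ∈ S

def opStep (S : Set α) : Set α :=
  S ∪ range fun t : S × S × β => op t.1 t.2.1 t.2.2

def opClosure (S : Set α) : Set α :=
  ⋃ n : ℕ, (opStep op)^[n] S

variable {op}

theorem subset_opClosure (S : Set α) : S ⊆ opClosure op S :=
  subset_iUnion (fun n => (opStep op)^[n] S) 0

theorem isClosedUnder_opClosure (S : Set α) : IsClosedUnder op (opClosure op S) := by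
  intro a ha b hb i
  obtain ⟨m, ha⟩ := mem_iUnion.1 ha
  obtain ⟨n, hb⟩ := mem_iUnion.1 hb
  have hmono : Monotone fun k => (opStep op)^[k] S :=
    fun _ _ hk => Function.monotone_iterate_of_id_le (fun _ => subset_union_left) hk S
  refine mem_iUnion.2 ⟨max m n + 1, ?_⟩
  rw [Function.iterate_succ_apply']
  exact subset_union_right ⟨(⟨a, hmono (le_max_left m n) ha⟩, ⟨b, hmono (le_max_right m n) hb⟩, i),
    rfl⟩

theorem mk_opStep_le [Countable β] {S : Set α} {c : Cardinal} (hc : ℵ₀ ≤ c) (hS : #S ≤ c) :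
    #(opStep op S) ≤ c := by
  refine (mk_union_le _ _).trans ((add_le_add_right mk_range_le _).trans ?_)
  simp only [mk_prod, lift_id]
  calc #S + #S * (#S * #β) ≤ c + c * (c * c) := by gcongr; exact mk_le_aleph0.trans hc
    _ = c := by rw [mul_eq_self hc, mul_eq_self hc, add_eq_self hc]

theorem mk_opClosure_le [Countable β] {S : Set α} {c : Cardinal} (hc : ℵ₀ ≤ c) (hS : #S ≤ c) :
    #(opClosure op S) ≤ c := by
  have hiter : ∀ n, #((opStep op)^[n] S) ≤ c := by
    intro n
    induction n with
    | zero => exact hS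
    | succ n ih => rw [Function.iterate_succ_apply']; exact mk_opStep_le hc ih
  calc #(opClosure op S) ≤ #ℕ * ⨆ n, #((opStep op)^[n] S) := mk_iUnion_le _
    _ ≤ c * c := by gcongr; exacts [mk_nat.trans_le hc, ciSup_le' hiter]
    _ = c := mul_eq_self hc

end OpClosure

section TransfiniteChain

variable {α : Type} (step : Set α → Set α)

noncomputable def transfiniteChain (o : Ordinal.{0}) : Set α :=
  Ordinal.limitRecOn (motive := fun _ => Set α) o ∅ (fun _ S => step S)
    fun o _ S => ⋃ (γ) (h : γ < o), S γ h

@[simp]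
theorem transfiniteChain_zero : transfiniteChain step 0 = ∅ :=
  Ordinal.limitRecOn_zero ..

theorem transfiniteChain_add_one (o : Ordinal) :
    transfiniteChain step (o + 1) = step (transfiniteChain step o) :=
  Ordinal.limitRecOn_add_one ..

theorem transfiniteChain_limit {l : Ordinal} (hl : Order.IsSuccLimit l) :
    transfiniteChain step l = ⋃ γ < l, transfiniteChain step γ :=
  Ordinal.limitRecOn_limit _ _ _ _ hl

variable {step}

theorem transfiniteChain_mono (hstep : ∀ S, S ⊆ step S) : Monotone (transfiniteChain step) := by
  intro γ o hγo
  induction o using Ordinal.limitRecOn with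
  | zero => rw [nonpos_iff_eq_zero.1 hγo]
  | add_one o ih =>
    rcases hγo.eq_or_lt with rfl | hlt
    · rfl
    · rw [transfiniteChain_add_one]
      exact (ih (Order.lt_add_one_iff.1 hlt)).trans (hstep _)
  | limit l hl _ =>
    rcases hγo.eq_or_lt with rfl | hlt
    · rfl
    · rw [transfiniteChain_limit step hl]
      exact subset_biUnion_of_mem (u := transfiniteChain step) hlt

theorem mk_transfiniteChain_le {c : Cardinal} (hc : ℵ₀ ≤ c)
    (hstep : ∀ (S : Set α) d, c ≤ d → #S ≤ d → #(step S) ≤ d) (o : Ordinal) :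
    #(transfiniteChain step o) ≤ c + o.card := by
  induction o using Ordinal.limitRecOn with
  | zero => simp
  | add_one o ih =>
    rw [transfiniteChain_add_one]
    exact hstep _ _ le_self_add (ih.trans (by gcongr; exact le_self_add))
  | limit l hl ih =>
    rw [transfiniteChain_limit step hl]
    exact mk_biUnion_le_of_le le_add_self (hc.trans le_self_add) _
      fun γ hγ => (ih γ hγ).trans (by gcongr)

theorem isClosedUnder_transfiniteChain {β : Type} {op : α → α → β → α}
    (hstep : ∀ S, S ⊆ step S) (hclosed : ∀ S, IsClosedUnder op (step S)) (o : Ordinal) :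
    IsClosedUnder op (transfiniteChain step o) := by
  induction o using Ordinal.limitRecOn with
  | zero => simp [IsClosedUnder]
  | add_one o _ => rw [transfiniteChain_add_one]; exact hclosed _
  | limit l hl ih =>
    rw [transfiniteChain_limit step hl]
    intro a ha b hb i
    obtain ⟨γ₁, h₁, ha⟩ := mem_iUnion₂.1 ha
    obtain ⟨γ₂, h₂, hb⟩ := mem_iUnion₂.1 hb
    have hmono := transfiniteChain_mono hstep
    exact mem_iUnion₂.2 ⟨max γ₁ γ₂, max_lt h₁ h₂, ih _ (max_lt h₁ h₂) a
      (hmono (le_max_left _ _) ha) b (hmono (le_max_right _ _) hb) i⟩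

end TransfiniteChain

section Construction

variable {K : Type} [TopologicalSpace K]

noncomputable def urysohnFunction (A B : Set K) : C(K, ℝ) :=
  Classical.epsilon fun h : C(K, ℝ) => EqOn h 0 A ∧ EqOn h 1 B

theorem urysohnFunction_spec [NormalSpace K] {A B : Set K} (hA : IsClosed A) (hB : IsClosed B)
    (hAB : Disjoint A B) : EqOn (urysohnFunction A B) 0 A ∧ EqOn (urysohnFunction A B) 1 B :=
  let ⟨h, h0, h1, _⟩ := exists_continuous_zero_one_of_isClosed hA hB hAB
  Classical.epsilon_spec (p := fun h : C(K, ℝ) => EqOn h 0 A ∧ EqOn h 1 B) ⟨h, h0, h1⟩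

noncomputable def levelSetSeparator (f g : C(K, ℝ)) (pq : ℚ × ℚ) : C(K, ℝ) :=
  urysohnFunction {z | f z ≤ pq.1} {z | pq.2 ≤ g z}

theorem exists_separator_of_isClosedUnder [NormalSpace K] {S : Set C(K, ℝ)}
    (hS : IsClosedUnder levelSetSeparator S) {f g : C(K, ℝ)} (hf : f ∈ S) (hg : g ∈ S) {p q : ℚ}
    (hpq : {z | f z ≤ p} ∩ {z | q ≤ g z} = ∅) :
    ∃ h ∈ S, (∀ z, f z ≤ p → h z = 0) ∧ (∀ z, q ≤ g z → h z = 1) :=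
  ⟨_, hS f hf g hg (p, q), urysohnFunction_spec (isClosed_le f.continuous continuous_const)
    (isClosed_le continuous_const g.continuous) (disjoint_iff_inter_eq_empty.2 hpq)⟩

variable (pair : Set C(K, ℝ) → K × K) (N : K → Set C(K, ℝ))

noncomputable def extensionStep (S : Set C(K, ℝ)) : Set C(K, ℝ) :=
  opClosure levelSetSeparator <|
    insert (urysohnFunction {(pair S).1} {(pair S).2}) (S ∪ N (pair S).1 ∪ (1 - ·) '' N (pair S).2)

variable {pair N} {S : Set C(K, ℝ)}

theorem subset_extensionStep : S ⊆ extensionStep pair N S :=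
  fun _ hf => subset_opClosure _ (.inr (.inl (.inl hf)))

theorem urysohnFunction_mem_extensionStep :
    urysohnFunction {(pair S).1} {(pair S).2} ∈ extensionStep pair N S :=
  subset_opClosure _ (mem_insert _ _)

theorem mk_extensionStep_le {c : Cardinal} (hc : ℵ₀ ≤ c) (hN : ∀ x, #(N x) ≤ c) (hS : #S ≤ c) :
    #(extensionStep pair N S) ≤ c := by
  refine mk_opClosure_le hc (mk_insert_le.trans ?_)
  calc _ ≤ #S + #(N (pair S).1) + #((1 - ·) '' N (pair S).2) + 1 := by
        gcongr; exact (mk_union_le _ _).trans (add_le_add_left (mk_union_le _ _) _)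
    _ ≤ c + c + c + c := by gcongr; exacts [hN _, mk_image_le.trans (hN _), one_le_aleph0.trans hc]
    _ = c := by rw [add_eq_self hc, add_eq_self hc, add_eq_self hc]

theorem mk_transfiniteChain_extensionStep_le (hN : ∀ x, #(N x) ≤ hL K) (γ : Ordinal) :
    #(transfiniteChain (extensionStep pair N) γ) ≤ hL K + γ.card :=
  mk_transfiniteChain_le aleph0_le_hL (fun _ _ hd hS =>
    mk_extensionStep_le (aleph0_le_hL.trans hd) (fun x => (hN x).trans hd) hS) γ

variable (hN : ∀ x, ∀ V ∈ 𝓝 x, ∃ h ∈ N x, h x = 0 ∧ EqOn h 1 Vᶜ)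
include hN

theorem exists_mem_extensionStep_setOf_lt_one_subset {V : Set K} (hV : V ∈ 𝓝 (pair S).1) :
    ∃ h ∈ extensionStep pair N S, (pair S).1 ∈ {z | h z < 1} ∧ {z | h z < 1} ⊆ V := by
  obtain ⟨h, hmem, h0, h1⟩ := hN _ V hV
  refine ⟨h, subset_opClosure _ (.inr (.inl (.inr hmem))), by simp [h0], fun z hz => ?_⟩
  by_contra hzV
  exact (h1 hzV).not_lt hz

theorem exists_mem_extensionStep_setOf_pos_subset {W : Set K} (hW : W ∈ 𝓝 (pair S).2) :
    ∃ h ∈ extensionStep pair N S, (pair S).2 ∈ {z | 0 < h z} ∧ {z | 0 < h z} ⊆ W := by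
  obtain ⟨h, hmem, h0, h1⟩ := hN _ W hW
  refine ⟨1 - h, subset_opClosure _ (.inr (.inr (mem_image_of_mem _ hmem))), by simp [h0],
    fun z hz => ?_⟩
  by_contra hzW
  simp [h1 hzW] at hz

end Construction

/-- Lemma 1.1 of the paper: for a compact Hausdorff space `K` of weight `κ` with
`hL(K)⁺ < κ` there are sequences `(F γ)`, `(f γ)` and `(x γ, y γ)` indexed by the ordinals
`γ < κ` satisfying conditions (a)–(e). -/
theorem exists_sequences_of_succ_hL_lt_weight (K : Type) [TopologicalSpace K]
    [CompactSpace K] [T2Space K] (κ : Cardinal) (hw : weight K = κ)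
    (hκ : Order.succ (hL K) < κ) :
    ∃ (F : Ordinal → Set C(K, ℝ)) (f : Ordinal → C(K, ℝ)) (x y : Ordinal → K),
      -- (a)
      (∀ γ < κ.ord, #(F γ) < κ) ∧
      (∀ γ γ' : Ordinal, γ ≤ γ' → γ' < κ.ord → F γ ⊆ F γ') ∧
      -- (b)
      (∀ l < κ.ord, Order.IsSuccLimit l → F l = ⋃ (γ : Ordinal) (_ : γ < l), F γ) ∧
      -- (c)
      (∀ γ < κ.ord, f γ ∈ F (γ + 1) ∧ f γ (x γ) = 0 ∧ f γ (y γ) = 1) ∧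
      -- (d)
      (∀ γ < κ.ord, ∀ g ∈ F γ, g (x γ) = g (y γ)) ∧
      -- (e) (i)
      (∀ γ < κ.ord, ∀ f' ∈ F γ, ∀ g' ∈ F γ, ∀ p q : ℚ,
        {z : K | f' z ≤ (p : ℝ)} ∩ {z : K | (q : ℝ) ≤ g' z} = ∅ →
          ∃ h₁ ∈ F γ, (∀ z : K, f' z ≤ (p : ℝ) → h₁ z = 0) ∧
            (∀ z : K, (q : ℝ) ≤ g' z → h₁ z = 1)) ∧
      -- (e) (ii)
      (∀ γ < κ.ord, ∀ V ∈ nhds (x γ),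
        ∃ h₂ ∈ F (γ + 1), x γ ∈ {z : K | h₂ z < 1} ∧ {z : K | h₂ z < 1} ⊆ V) ∧
      -- (e) (iii)
      (∀ γ < κ.ord, ∀ W ∈ nhds (y γ),
        ∃ h₃ ∈ F (γ + 1), y γ ∈ {z : K | 0 < h₃ z} ∧ {z : K | 0 < h₃ z} ⊆ W) := by
  subst hw
  have hθκ : hL K < weight K := (Order.lt_succ _).trans hκ
  have hωκ : ℵ₀ < weight K := aleph0_le_hL.trans_lt hθκ
  choose N hNcard hN using exists_family_mk_le_hL_eqOn_one_compl_nhds (K := K)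
  obtain ⟨pair, hpair⟩ := exists_pair_ne_forall_eq_of_mk_lt_weight hωκ
  set F := transfiniteChain (extensionStep pair N)
  have hsucc (γ : Ordinal) : F (γ + 1) = extensionStep pair N (F γ) := transfiniteChain_add_one _ γ
  have hstep (S : Set C(K, ℝ)) : S ⊆ extensionStep pair N S := subset_extensionStep
  have hFcard : ∀ γ < (weight K).ord, #(F γ) < weight K := fun γ hγ =>
    (mk_transfiniteChain_extensionStep_le hNcard γ).trans_lt
      (add_lt_of_lt hωκ.le hθκ (lt_ord.1 hγ))
  refine ⟨F, fun γ => urysohnFunction {(pair (F γ)).1} {(pair (F γ)).2}, fun γ => (pair (F γ)).1,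
    fun γ => (pair (F γ)).2, hFcard, fun γ γ' h _ => transfiniteChain_mono hstep h,
    fun l _ hl => transfiniteChain_limit _ hl, fun γ hγ => ?_,
    fun γ hγ => (hpair _ (hFcard γ hγ)).2, fun γ _ f hf g hg p q hpq => ?_,
    fun γ _ V hV => ?_, fun γ _ W hW => ?_⟩
  · have hxy := urysohnFunction_spec isClosed_singleton isClosed_singleton
      (disjoint_singleton.2 (hpair _ (hFcard γ hγ)).1)
    exact ⟨hsucc γ ▸ urysohnFunction_mem_extensionStep, hxy.1 rfl, hxy.2 rfl⟩
  · exact exists_separator_of_isClosedUnder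
      (isClosedUnder_transfiniteChain hstep (fun _ => isClosedUnder_opClosure _) γ) hf hg hpq
  · rw [hsucc]; exact exists_mem_extensionStep_setOf_lt_one_subset hN hV
  · rw [hsucc]; exact exists_mem_extensionStep_setOf_pos_subset hN hW
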